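/- (Lemma 9.1(ii), type 3 tails) Under the linear quantile regression setup with type 3 tails of index ξ < 0, there exists a vector c ∈ ℝ^d with μ_Xᵀc = 1, xᵀc > 0 and K(x) = (xᵀc)^{1/ξ} for all x ∈ 𝐗, such that, setting a_T := 1/F_u⁻¹(1/T) for integers T with 1/T ∈ (0,η], for every compact set 𝒦 ⊂ (0,∞) one has sup_{k ∈ 𝒦} ‖a_T·γ(k/T) − k^{−ξ}·c‖ → 0 as the integer T → ∞ (for T large enough that k/T ∈ (0,η] for all k ∈ 𝒦). -/

import Mathlib

/-!
Right continuity and regular variation of `Fu` at its lower endpoint `0` give `Fu (q τ) ~ τ`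
for the quantile function `q` of `Fu`; combined with the tail equivalence `F x z ~ K x * Fu z`
this yields `F x (v * q τ) / τ → K x * v ^ (-1 / ξ)` for every `v > 0`. Inverting, the
conditional quantiles satisfy `F⁻¹(k τ | x) / q τ → (k / K x) ^ (-ξ)`, jointly as `τ → 0⁺` and
`k → k₀`. By the linear specification these are the numbers `x ⬝ᵥ γ (k τ) / q τ`. Positive
definiteness of the second moments makes the support span `ℝ^d`, so finitely many support points
determine a vector through its dot products, and `γ (k τ) / q τ` itself converges to
`k₀ ^ (-ξ) • c`. Joint convergence to a continuous limit is locally uniform convergence, hence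
uniform on compact sets of `k`; and `μ_X ⬝ᵥ γ τ = q τ` forces `μ_X ⬝ᵥ c = 1`.
-/

open MeasureTheory Filter Topology Real
open Set Matrix

noncomputable def quantile (G : ℝ → ℝ) (τ : ℝ) : ℝ := sInf {z | τ < G z}

section Quantile

variable {G : ℝ → ℝ} {τ z : ℝ}

lemma bddBelow_setOf_lt_apply (hG : ∀ z < 0, G z = 0) (hτ : 0 ≤ τ) : BddBelow {z | τ < G z} :=
  ⟨0, fun z hz => not_lt.1 fun hz0 => (hz.trans_eq (hG z hz0)).not_ge hτ⟩

lemma quantile_le (hG : ∀ z < 0, G z = 0) (hτ : 0 ≤ τ) (h : τ < G z) : quantile G τ ≤ z :=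
  csInf_le (bddBelow_setOf_lt_apply hG hτ) h

lemma apply_le_of_lt_quantile (hG : ∀ z < 0, G z = 0) (hτ : 0 ≤ τ) (h : z < quantile G τ) :
    G z ≤ τ :=
  not_lt.1 fun h' => h.not_ge (quantile_le hG hτ h')

lemma le_apply_quantile (hmono : Monotone G) (hrc : ∀ z, ContinuousWithinAt G (Ici z) z)
    (hne : ∃ z, τ < G z) : τ ≤ G (quantile G τ) := by
  refine ge_of_tendsto ((hrc _).mono Ioi_subset_Ici_self) ?_
  filter_upwards [self_mem_nhdsWithin] with z hz
  obtain ⟨w, hw, hwz⟩ := exists_lt_of_csInf_lt hne hz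
  exact (lt_of_lt_of_le hw (hmono hwz.le)).le

lemma quantile_pos (hmono : Monotone G) (h0 : Tendsto G (𝓝[>] 0) (𝓝 0)) (hτ : 0 < τ)
    (hne : ∃ z, τ < G z) : 0 < quantile G τ := by
  obtain ⟨δ, hδ, hδpos⟩ := ((h0.eventually (gt_mem_nhds hτ)).and self_mem_nhdsWithin).exists
  exact hδpos.trans_le (le_csInf hne fun z hz => (hmono.reflect_lt (hδ.trans hz)).le)

theorem tendsto_quantile_div {ι : Type*} {l : Filter ι} (hmono : Monotone G) {τ r : ι → ℝ}
    (hτ : ∀ᶠ i in l, 0 < τ i) (hr : ∀ᶠ i in l, 0 < r i) {a α : ℝ} (ha : 0 < a) (hα : 0 < α)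
    (h : ∀ v > 0, Tendsto (fun i => G (v * r i) / τ i) l (𝓝 ((v / a) ^ α))) :
    Tendsto (fun i => quantile G (τ i) / r i) l (𝓝 a) := by
  have above : ∀ v > a, ∀ᶠ i in l, τ i < G (v * r i) := fun v hv => by
    filter_upwards [(h v (ha.trans hv)).eventually
      (lt_mem_nhds (one_lt_rpow ((one_lt_div ha).2 hv) hα)), hτ] with i hi hτi
    exact (one_lt_div hτi).1 hi
  have below : ∀ v > 0, v < a → ∀ᶠ i in l, ∀ z ∈ {z | τ i < G z}, v * r i < z :=
    fun v hv hva => by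
    filter_upwards [(h v hv).eventually
      (gt_mem_nhds (rpow_lt_one (div_pos hv ha).le ((div_lt_one ha).2 hva) hα)), hτ]
      with i hi hτi z hz
    exact hmono.reflect_lt (((div_lt_one hτi).1 hi).trans hz)
  refine tendsto_order.2 ⟨fun b hb => ?_, fun b hb => ?_⟩
  · obtain ⟨v, hbv, hva⟩ := exists_between (max_lt hb ha)
    filter_upwards [below v ((le_max_right _ _).trans_lt hbv) hva, above (2 * a) (by linarith), hr]
      with i hbelow habove hri
    rw [lt_div_iff₀ hri]
    calc b * r i < v * r i := mul_lt_mul_of_pos_right ((le_max_left _ _).trans_lt hbv) hri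
      _ ≤ quantile G (τ i) := le_csInf ⟨_, habove⟩ fun z hz => (hbelow z hz).le
  · obtain ⟨v, hav, hvb⟩ := exists_between hb
    filter_upwards [below (a / 2) (half_pos ha) (half_lt_self ha), above v hav, hr]
      with i hbelow habove hri
    rw [div_lt_iff₀ hri]
    calc quantile G (τ i) ≤ v * r i := csInf_le ⟨_, fun z hz => (hbelow z hz).le⟩ habove
      _ < b * r i := mul_lt_mul_of_pos_right hvb hri

end Quantile

lemma tendsto_const_mul_nhdsGT_zero {x : ℝ} (hx : 0 < x) :
    Tendsto (x * ·) (𝓝[>] 0) (𝓝[>] 0) :=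
  tendsto_iff_comap.2 (comap_mulLeft_nhdsGT_zero hx).ge

lemma tendsto_snd_mul_fst_nhdsGT_zero {k : ℝ} (hk : 0 < k) :
    Tendsto (fun p : ℝ × ℝ => p.2 * p.1) (𝓝[>] 0 ×ˢ 𝓝 k) (𝓝[>] 0) := by
  refine tendsto_nhdsWithin_iff.2 ⟨?_, ?_⟩
  · have h : Tendsto (fun p : ℝ × ℝ => p.2 * p.1) (𝓝[>] 0 ×ˢ 𝓝 k) (𝓝 (k * 0)) :=
      tendsto_snd.mul (tendsto_fst.mono_right nhdsWithin_le_nhds)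
    rwa [mul_zero] at h
  · filter_upwards [tendsto_fst.eventually self_mem_nhdsWithin,
      tendsto_snd.eventually (lt_mem_nhds hk)] with p h1 h2
    exact mul_pos h2 h1

structure IsType3Tail (Fu : ℝ → ℝ) (ξ : ℝ) : Prop where
  monotone : Monotone Fu
  continuousWithinAt_Ici : ∀ z, ContinuousWithinAt Fu (Ici z) z
  eq_zero_of_neg : ∀ z < 0, Fu z = 0
  pos_of_pos : ∀ z > 0, 0 < Fu z
  tendsto_div : ∀ v > 0, Tendsto (fun z => Fu (v * z) / Fu z) (𝓝[>] 0) (𝓝 (v ^ (-1 / ξ)))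
  index_neg : ξ < 0

namespace IsType3Tail

variable {Fu : ℝ → ℝ} {ξ : ℝ}

lemma index_pos (hF : IsType3Tail Fu ξ) : 0 < -1 / ξ :=
  div_pos_of_neg_of_neg (by norm_num) hF.index_neg

lemma apply_zero (hF : IsType3Tail Fu ξ) : Fu 0 = 0 := by
  by_contra h0
  have hc : Tendsto Fu (𝓝[>] 0) (𝓝 (Fu 0)) :=
    (hF.continuousWithinAt_Ici 0).mono Ioi_subset_Ici_self
  have h2 := (hc.comp (tendsto_const_mul_nhdsGT_zero two_pos)).div hc h0
  rw [div_self h0] at h2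
  exact (one_lt_rpow one_lt_two hF.index_pos).ne'
    (tendsto_nhds_unique (hF.tendsto_div 2 two_pos) h2)

lemma tendsto_nhdsGT_zero (hF : IsType3Tail Fu ξ) : Tendsto Fu (𝓝[>] 0) (𝓝 0) := by
  have := ((hF.continuousWithinAt_Ici 0).mono Ioi_subset_Ici_self).tendsto
  rwa [hF.apply_zero] at this

lemma tendsto_quantile (hF : IsType3Tail Fu ξ) :
    Tendsto (quantile Fu) (𝓝[>] 0) (𝓝[>] 0) := by
  have hpos : ∀ᶠ τ in 𝓝[>] 0, 0 < quantile Fu τ := by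
    filter_upwards [Ioo_mem_nhdsGT (hF.pos_of_pos 1 one_pos)] with τ hτ
    exact quantile_pos hF.monotone hF.tendsto_nhdsGT_zero hτ.1 ⟨1, hτ.2⟩
  refine tendsto_nhdsWithin_iff.2 ⟨tendsto_order.2 ⟨fun b hb => ?_, fun b hb => ?_⟩, hpos⟩
  · exact hpos.mono fun τ h => hb.trans h
  · filter_upwards [Ioo_mem_nhdsGT (hF.pos_of_pos (b / 2) (half_pos hb))] with τ hτ
    exact (quantile_le hF.eq_zero_of_neg hτ.1.le hτ.2).trans_lt (half_lt_self hb)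

lemma tendsto_apply_quantile_div (hF : IsType3Tail Fu ξ) :
    Tendsto (fun τ => Fu (quantile Fu τ) / τ) (𝓝[>] 0) (𝓝 1) := by
  have hev : ∀ᶠ τ in 𝓝[>] 0, τ ∈ Ioo 0 (Fu 1) ∧ 0 < quantile Fu τ :=
    Eventually.and (Ioo_mem_nhdsGT (hF.pos_of_pos 1 one_pos))
      (hF.tendsto_quantile.eventually self_mem_nhdsWithin)
  have hge : ∀ᶠ τ in 𝓝[>] 0, 1 ≤ Fu (quantile Fu τ) / τ := hev.mono fun τ h =>
    (one_le_div h.1.1).2 (le_apply_quantile hF.monotone hF.continuousWithinAt_Ici ⟨1, h.1.2⟩)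
  refine tendsto_order.2 ⟨fun b hb => hge.mono fun τ h => hb.trans_le h, fun b hb => ?_⟩
  obtain ⟨b', hb', hb'b⟩ := exists_between hb
  set v := b'⁻¹ ^ (-1 / ξ)⁻¹
  have hv : 0 < v := rpow_pos_of_pos (inv_pos.2 (one_pos.trans hb')) _
  have hv1 : v < 1 := rpow_lt_one (inv_pos.2 (one_pos.trans hb')).le (inv_lt_one_of_one_lt₀ hb')
    (inv_pos.2 hF.index_pos)
  have hlim : Tendsto (fun τ => (Fu (v * quantile Fu τ) / Fu (quantile Fu τ))⁻¹) (𝓝[>] 0)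
      (𝓝 b') := by
    have := ((hF.tendsto_div v hv).comp hF.tendsto_quantile).inv₀
      (rpow_pos_of_pos hv _).ne'
    rwa [rpow_inv_rpow (inv_pos.2 (one_pos.trans hb')).le hF.index_pos.ne', inv_inv] at this
  filter_upwards [hev, hlim.eventually (gt_mem_nhds hb'b)] with τ ⟨hτ, hq⟩ hlt
  have hvq : 0 < Fu (v * quantile Fu τ) := hF.pos_of_pos _ (mul_pos hv hq)
  refine lt_of_le_of_lt ?_ hlt
  rw [inv_div]
  exact div_le_div_of_nonneg_left (hF.pos_of_pos _ hq).le hvq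
    (apply_le_of_lt_quantile hF.eq_zero_of_neg hτ.1.le ((mul_lt_iff_lt_one_left hq).2 hv1))

lemma tendsto_apply_mul_quantile_div (hF : IsType3Tail Fu ξ) {f : ℝ → ℝ} {κ : ℝ}
    (hf : Tendsto (fun z => f z / Fu z) (𝓝[>] 0) (𝓝 κ)) {v : ℝ} (hv : 0 < v) :
    Tendsto (fun τ => f (v * quantile Fu τ) / τ) (𝓝[>] 0) (𝓝 (κ * v ^ (-1 / ξ))) := by
  have := ((hf.comp ((tendsto_const_mul_nhdsGT_zero hv).comp hF.tendsto_quantile)).mul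
    ((hF.tendsto_div v hv).comp hF.tendsto_quantile)).mul hF.tendsto_apply_quantile_div
  rw [mul_one] at this
  refine this.congr' ?_
  filter_upwards [hF.tendsto_quantile.eventually self_mem_nhdsWithin] with τ hq
  have h1 := (hF.pos_of_pos _ (mul_pos hv hq)).ne'
  have h2 := (hF.pos_of_pos _ hq).ne'
  simp only [Function.comp_apply]
  field_simp

lemma tendsto_quantile_mul_div_quantile (hF : IsType3Tail Fu ξ) {f : ℝ → ℝ} (hmono : Monotone f)
    {κ : ℝ} (hκ : 0 < κ) (hf : Tendsto (fun z => f z / Fu z) (𝓝[>] 0) (𝓝 κ)) {k : ℝ}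
    (hk : 0 < k) :
    Tendsto (fun p : ℝ × ℝ => quantile f (p.2 * p.1) / quantile Fu p.1) (𝓝[>] 0 ×ˢ 𝓝 k)
      (𝓝 ((k / κ) ^ (-ξ))) := by
  refine tendsto_quantile_div hmono
    ((tendsto_snd_mul_fst_nhdsGT_zero hk).eventually self_mem_nhdsWithin)
    ((hF.tendsto_quantile.comp tendsto_fst).eventually self_mem_nhdsWithin)
    (rpow_pos_of_pos (div_pos hk hκ) _) hF.index_pos fun v hv => ?_
  have hpow : ((k / κ) ^ (-ξ)) ^ (-1 / ξ) = k / κ := by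
    rw [← rpow_mul (div_pos hk hκ).le, show -ξ * (-1 / ξ) = 1 by field_simp [hF.index_neg.ne],
      rpow_one]
  have := ((hF.tendsto_apply_mul_quantile_div hf hv).comp tendsto_fst).div tendsto_snd hk.ne'
  rw [div_rpow hv.le (rpow_pos_of_pos (div_pos hk hκ) _).le, hpow]
  convert this using 2
  · simp only [Pi.div_apply, Function.comp_apply, div_div, mul_comm]
  · field_simp

end IsType3Tail

section Dot

variable {n : ℕ}

lemma dotProduct_mulVec_secondMoment (μ : Measure (Fin n → ℝ))
    (hint : ∀ i j, Integrable (fun x : Fin n → ℝ => x i * x j) μ) (w : Fin n → ℝ) :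
    w ⬝ᵥ ((Matrix.of fun i j => ∫ x, x i * x j ∂μ) *ᵥ w) = ∫ x, (x ⬝ᵥ w) ^ 2 ∂μ := by
  have hint' : ∀ i j, Integrable (fun x : Fin n → ℝ => w i * (x i * x j * w j)) μ :=
    fun i j => ((hint i j).mul_const _).const_mul _
  calc w ⬝ᵥ ((Matrix.of fun i j => ∫ x, x i * x j ∂μ) *ᵥ w)
      = ∑ i, ∑ j, ∫ x, w i * (x i * x j * w j) ∂μ := by
        simp only [dotProduct, mulVec, of_apply, Finset.mul_sum, integral_mul_const,
          integral_const_mul]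
    _ = ∫ x, ∑ i, ∑ j, w i * (x i * x j * w j) ∂μ := by
        rw [integral_finsetSum _ fun i _ => integrable_finsetSum _ fun j _ => hint' i j]
        exact Finset.sum_congr rfl fun i _ => (integral_finsetSum _ fun j _ => hint' i j).symm
    _ = ∫ x, (x ⬝ᵥ w) ^ 2 ∂μ := by
        simp only [sq, dotProduct, Finset.sum_mul_sum]
        exact integral_congr_ae (Eventually.of_forall fun x => Finset.sum_congr rfl
          fun i _ => Finset.sum_congr rfl fun j _ => by ring)

theorem eq_zero_of_forall_mem_support_dotProduct_eq_zero {μ : Measure (Fin n → ℝ)}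
    [IsFiniteMeasure μ] (hcpt : IsCompact μ.support)
    (hpd : (Matrix.of fun i j => ∫ x, x i * x j ∂μ).PosDef) {w : Fin n → ℝ}
    (hw : ∀ x ∈ μ.support, x ⬝ᵥ w = 0) : w = 0 := by
  have hae : ∀ᵐ x ∂μ, x ∈ μ.support := Measure.support_mem_ae
  have hint : ∀ i j, Integrable (fun x : Fin n → ℝ => x i * x j) μ := fun i j => by
    rw [← Measure.restrict_eq_self_of_ae_mem hae]
    exact (by fun_prop : Continuous fun x : Fin n → ℝ => x i * x j).continuousOn
      |>.integrableOn_compact hcpt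
  by_contra hw0
  have hpos := hpd.dotProduct_mulVec_pos hw0
  rw [star_trivial, dotProduct_mulVec_secondMoment μ hint,
    integral_eq_zero_of_ae (hae.mono fun x hx => by simp [hw x hx])] at hpos
  exact hpos.false

theorem exists_finset_subset_forall_dotProduct_eq_zero {S : Set (Fin n → ℝ)}
    (hS : ∀ w, (∀ x ∈ S, x ⬝ᵥ w = 0) → w = 0) :
    ∃ s : Finset (Fin n → ℝ), ↑s ⊆ S ∧ ∀ w, (∀ x ∈ s, x ⬝ᵥ w = 0) → w = 0 := by
  obtain ⟨b, hbS, hspan, hli⟩ := exists_linearIndependent ℝ S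
  refine ⟨hli.setFinite.toFinset, by simpa using hbS, fun w hw => hS w fun x hx => ?_⟩
  have hx' : x ∈ Submodule.span ℝ b := hspan ▸ Submodule.subset_span hx
  clear hx
  induction hx' using Submodule.span_induction with
  | mem y hy => exact hw y (by simpa using hy)
  | zero => exact zero_dotProduct w
  | add y z _ _ hy hz => rw [add_dotProduct, hy, hz, add_zero]
  | smul a y _ hy => rw [smul_dotProduct, hy, smul_zero]

variable {s : Finset (Fin n → ℝ)} {ι : Type*} {l : Filter ι} {G : ι → Fin n → ℝ}

lemma isClosedEmbedding_mulVec_of_finset (hs : ∀ w, (∀ x ∈ s, x ⬝ᵥ w = 0) → w = 0) :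
    IsClosedEmbedding ((Matrix.of fun x : s => (x : Fin n → ℝ)) *ᵥ ·) :=
  LinearMap.isClosedEmbedding_of_injective (f := mulVecLin _) <| LinearMap.ker_eq_bot'.2
    fun w hw => hs w fun x hx => congrFun hw ⟨x, hx⟩

theorem tendsto_nhds_of_tendsto_dotProduct (hs : ∀ w, (∀ x ∈ s, x ⬝ᵥ w = 0) → w = 0)
    {c : Fin n → ℝ} (h : ∀ x ∈ s, Tendsto (fun i => x ⬝ᵥ G i) l (𝓝 (x ⬝ᵥ c))) :
    Tendsto G l (𝓝 c) :=
  (isClosedEmbedding_mulVec_of_finset hs).tendsto_nhds_iff.2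
    (tendsto_pi_nhds.2 fun x => h x x.2)

theorem exists_tendsto_of_tendsto_dotProduct [l.NeBot]
    (hs : ∀ w, (∀ x ∈ s, x ⬝ᵥ w = 0) → w = 0) {y : (Fin n → ℝ) → ℝ}
    (h : ∀ x ∈ s, Tendsto (fun i => x ⬝ᵥ G i) l (𝓝 (y x))) : ∃ c, Tendsto G l (𝓝 c) := by
  obtain ⟨c, hc⟩ : (fun x : s => y x) ∈ range ((Matrix.of fun x : s => (x : Fin n → ℝ)) *ᵥ ·) :=
    (isClosedEmbedding_mulVec_of_finset hs).isClosed_range.mem_of_tendsto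
      (tendsto_pi_nhds.2 fun x => h x x.2) (Eventually.of_forall fun i => mem_range_self (G i))
  exact ⟨c, tendsto_nhds_of_tendsto_dotProduct hs fun x hx => by
    convert h x hx using 2
    exact congrFun hc ⟨x, hx⟩⟩

end Dot

theorem exists_forall_tendsto_smul_of_tendsto_dotProduct {n : ℕ} {ι : Type*} {S : Set (Fin n → ℝ)}
    (hS : ∀ w, (∀ x ∈ S, x ⬝ᵥ w = 0) → w = 0) {l : ℝ → Filter ι} [(l 1).NeBot]
    {G : ι → Fin n → ℝ} {φ : ℝ → ℝ} (hφ : φ 1 = 1) {y : (Fin n → ℝ) → ℝ}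
    (h : ∀ x ∈ S, ∀ k > 0, Tendsto (fun i => x ⬝ᵥ G i) (l k) (𝓝 (φ k * y x))) :
    ∃ c, (∀ x ∈ S, x ⬝ᵥ c = y x) ∧ ∀ k > 0, Tendsto G (l k) (𝓝 (φ k • c)) := by
  obtain ⟨s, hsS, hs⟩ := exists_finset_subset_forall_dotProduct_eq_zero hS
  have h1 : ∀ x ∈ S, Tendsto (fun i => x ⬝ᵥ G i) (l 1) (𝓝 (y x)) := fun x hx => by
    simpa [hφ] using h x hx 1 one_pos
  obtain ⟨c, hc⟩ := exists_tendsto_of_tendsto_dotProduct hs fun x hx => h1 x (hsS hx)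
  have hcy : ∀ x ∈ S, x ⬝ᵥ c = y x := fun x hx =>
    tendsto_nhds_unique (((continuous_const.dotProduct continuous_id).tendsto c).comp hc) (h1 x hx)
  refine ⟨c, hcy, fun k hk => tendsto_nhds_of_tendsto_dotProduct hs fun x hx => ?_⟩
  rw [dotProduct_smul, smul_eq_mul, hcy x (hsS hx)]
  exact h x (hsS hx) k hk

theorem IsOpen.tendstoLocallyUniformlyOn_of_tendsto {ι α β : Type*} [TopologicalSpace α]
    [UniformSpace β] {F : ι → α → β} {f : α → β} {p : Filter ι} {s : Set α} (hs : IsOpen s)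
    (hf : ContinuousOn f s)
    (h : ∀ x ∈ s, Tendsto (fun y : ι × α => F y.1 y.2) (p ×ˢ 𝓝 x) (𝓝 (f x))) :
    TendstoLocallyUniformlyOn F f p s :=
  hs.tendstoLocallyUniformlyOn_iff_forall_tendsto.2 fun x hx =>
    (((hf.continuousAt (hs.mem_nhds hx)).tendsto.comp tendsto_snd).prodMk_nhds
      (h x hx)).mono_right (nhds_le_uniformity _)

theorem eventually_forall_mem_dist_one_div_natCast_lt {E : Type*} [PseudoMetricSpace E]
    {G : ℝ → ℝ → E} {f : ℝ → E} (hf : ContinuousOn f (Ioi 0))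
    (h : ∀ k > 0, Tendsto (fun p : ℝ × ℝ => G p.1 p.2) (𝓝[>] 0 ×ˢ 𝓝 k) (𝓝 (f k)))
    {Ks : Set ℝ} (hKs : IsCompact Ks) (hKs0 : Ks ⊆ Ioi 0) {ε : ℝ} (hε : 0 < ε) :
    ∀ᶠ T : ℕ in atTop, ∀ k ∈ Ks, dist (f k) (G (1 / T) k) < ε := by
  have hunif : TendstoUniformlyOn G f (𝓝[>] 0) Ks :=
    (tendstoLocallyUniformlyOn_iff_tendstoUniformlyOn_of_compact hKs).1
      ((isOpen_Ioi.tendstoLocallyUniformlyOn_of_tendsto hf h).mono hKs0)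
  have hT : Tendsto (fun T : ℕ => 1 / (T : ℝ)) atTop (𝓝[>] 0) :=
    (tendsto_inv_atTop_nhdsGT_zero.comp tendsto_natCast_atTop_atTop).congr
      fun T => (one_div (T : ℝ)).symm
  exact hT.eventually (Metric.tendstoUniformlyOn_iff.1 hunif ε hε)

theorem extremal_qr_lem91ii_type3_general
    (d : ℕ)
    (μ : Measure (Fin d → ℝ)) [IsProbabilityMeasure μ]
    (Xs : Set (Fin d → ℝ))
    (hXssupp : ∀ x, x ∈ Xs ↔ ∀ U ∈ 𝓝 x, 0 < μ U)
    (hXscpt : IsCompact Xs)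
    (hposdef : (Matrix.of fun i j : Fin d => ∫ x, x i * x j ∂μ).PosDef)
    (η : ℝ) (hη : η ∈ Set.Ioc (0:ℝ) 1)
    (γ : ℝ → Fin d → ℝ)
    (F : (Fin d → ℝ) → ℝ → ℝ)
    (hFmono : ∀ x ∈ Xs, Monotone (F x))
    (hlin : ∀ τ ∈ Set.Ioc (0:ℝ) η, ∀ x ∈ Xs, sInf {z | τ < F x z} = ∑ i, x i * γ τ i)
    (Fu : ℝ → ℝ)
    (hFumono : Monotone Fu)
    (hFurc : ∀ z : ℝ, ContinuousWithinAt Fu (Set.Ici z) z)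
    (hFuinv : ∀ τ ∈ Set.Ioc (0:ℝ) η, sInf {z | τ < Fu z} = ∑ i, (∫ x, x i ∂μ) * γ τ i)
    (K : (Fin d → ℝ) → ℝ)
    (hKpos : ∀ x ∈ Xs, 0 < K x)
    (ξ : ℝ) (hξ : ξ < 0)
    (hFu0 : ∀ z < (0:ℝ), Fu z = 0)
    (hFupos : ∀ z > (0:ℝ), 0 < Fu z)
    (hreg : ∀ v > (0:ℝ), Tendsto (fun z => Fu (v * z) / Fu z) (𝓝[>] (0:ℝ)) (𝓝 (v ^ (-1/ξ))))
    (htaileq : TendstoUniformlyOn (fun z x => F x z / Fu z) K (𝓝[>] (0:ℝ)) Xs)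
    :
    ∃ c : Fin d → ℝ, (∑ i, (∫ x, x i ∂μ) * c i) = 1 ∧
      (∀ x ∈ Xs, 0 < (∑ i, x i * c i) ∧ K x = (∑ i, x i * c i) ^ (1/ξ)) ∧
      ∀ Ks : Set ℝ, IsCompact Ks → Ks ⊆ Set.Ioi 0 →
        ∀ ε > (0:ℝ), ∀ᶠ T : ℕ in atTop, ∀ k ∈ Ks,
          ‖(1 / sInf {z | (1:ℝ) / (T:ℝ) < Fu z}) • γ (k / (T:ℝ)) - (k ^ (-ξ)) • c‖ < ε := by
  obtain rfl : Xs = μ.support :=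
    Set.ext fun x => (hXssupp x).trans (μ.mem_support_iff_forall x).symm
  have hFu : IsType3Tail Fu ξ := ⟨hFumono, hFurc, hFu0, hFupos, hreg, hξ⟩
  set G : ℝ × ℝ → Fin d → ℝ := fun p => (1 / quantile Fu p.1) • γ (p.2 * p.1)
  have hratio : ∀ x ∈ μ.support, ∀ k > 0, Tendsto (fun p => x ⬝ᵥ G p) (𝓝[>] 0 ×ˢ 𝓝 k)
      (𝓝 (k ^ (-ξ) * (1 / K x) ^ (-ξ))) := by
    intro x hx k hk
    rw [← mul_rpow hk.le (one_div_pos.2 (hKpos x hx)).le, ← div_eq_mul_one_div]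
    refine (hFu.tendsto_quantile_mul_div_quantile (hFmono x hx) (hKpos x hx)
      (htaileq.tendsto_at hx) hk).congr' ?_
    filter_upwards [(tendsto_snd_mul_fst_nhdsGT_zero hk).eventually (Ioc_mem_nhdsGT hη.1)]
      with p hp
    rw [dotProduct_smul, smul_eq_mul, one_div_mul_eq_div]
    exact congrArg (· / _) (hlin _ hp x hx)
  obtain ⟨c, hcK, hlim⟩ := exists_forall_tendsto_smul_of_tendsto_dotProduct
    (fun w hw => eq_zero_of_forall_mem_support_dotProduct_eq_zero hXscpt hposdef hw)
    (φ := (· ^ (-ξ))) (one_rpow _) hratio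
  refine ⟨c, ?_, fun x hx => ?_, fun Ks hKs hKs0 ε hε => ?_⟩
  · have hc := (hlim 1 one_pos).comp (tendsto_id.prodMk tendsto_const_nhds)
    rw [one_rpow, one_smul] at hc
    refine tendsto_nhds_unique (((continuous_const.dotProduct continuous_id).tendsto c).comp hc)
      (tendsto_const_nhds.congr' ?_)
    filter_upwards [Ioc_mem_nhdsGT hη.1, hFu.tendsto_quantile.eventually self_mem_nhdsWithin]
      with τ hτ hq
    show 1 = (fun i => ∫ x, x i ∂μ) ⬝ᵥ ((1 / quantile Fu τ) • γ (1 * τ))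
    rw [dotProduct_smul, smul_eq_mul, one_mul, one_div_mul_eq_div]
    exact (div_self hq.ne').symm.trans (congrArg (· / _) (hFuinv τ hτ))
  · have hK := hKpos x hx
    rw [show ∑ i, x i * c i = (1 / K x) ^ (-ξ) from hcK x hx, ← rpow_mul (by positivity),
      neg_mul, mul_one_div_cancel hξ.ne, rpow_neg_one, one_div, inv_inv]
    exact ⟨by positivity, rfl⟩
  · filter_upwards [eventually_forall_mem_dist_one_div_natCast_lt (G := fun τ k => G (τ, k))
      ((continuous_rpow_const (neg_nonneg.2 hξ.le)).smul continuous_const).continuousOn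
      hlim hKs hKs0 hε] with T hT k hk
    simpa [G, quantile, dist_eq_norm, norm_sub_rev, ← div_eq_mul_inv] using hT k hk

theorem extremal_qr_lem91ii_type3
    (d : ℕ) (hd : 1 ≤ d)
    (μ : Measure (Fin d → ℝ)) [IsProbabilityMeasure μ]
    (Xs : Set (Fin d → ℝ))
    (hXssupp : ∀ x, x ∈ Xs ↔ ∀ U ∈ 𝓝 x, 0 < μ U)
    (hXscpt : IsCompact Xs)
    (hposdef : (Matrix.of fun i j : Fin d => ∫ x, x i * x j ∂μ).PosDef)
    (hmean : ∀ i : Fin d, (∫ x, x i ∂μ) = if (i : ℕ) = 0 then (1:ℝ) else 0)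
    (η : ℝ) (hη : η ∈ Set.Ioc (0:ℝ) 1)
    (γ : ℝ → Fin d → ℝ)
    (F : (Fin d → ℝ) → ℝ → ℝ)
    (hFmono : ∀ x ∈ Xs, Monotone (F x))
    (hFrc : ∀ x ∈ Xs, ∀ z : ℝ, ContinuousWithinAt (F x) (Set.Ici z) z)
    (hFrange : ∀ x ∈ Xs, ∀ z : ℝ, F x z ∈ Set.Icc (0:ℝ) 1)
    (hlin : ∀ τ ∈ Set.Ioc (0:ℝ) η, ∀ x ∈ Xs, sInf {z | τ < F x z} = ∑ i, x i * γ τ i)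
    (Fu : ℝ → ℝ)
    (hFumono : Monotone Fu)
    (hFurc : ∀ z : ℝ, ContinuousWithinAt Fu (Set.Ici z) z)
    (hFurange : ∀ z : ℝ, Fu z ∈ Set.Icc (0:ℝ) 1)
    (hFuinv : ∀ τ ∈ Set.Ioc (0:ℝ) η, sInf {z | τ < Fu z} = ∑ i, (∫ x, x i ∂μ) * γ τ i)
    (K : (Fin d → ℝ) → ℝ)
    (hKcont : ContinuousOn K Xs)
    (hKbdd : BddAbove (K '' Xs))
    (hKpos : ∀ x ∈ Xs, 0 < K x)
    (ξ : ℝ) (hξ : ξ < 0)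
    (hFu0 : ∀ z < (0:ℝ), Fu z = 0)
    (hFupos : ∀ z > (0:ℝ), 0 < Fu z)
    (hreg : ∀ v > (0:ℝ), Tendsto (fun z => Fu (v * z) / Fu z) (𝓝[>] (0:ℝ)) (𝓝 (v ^ (-1/ξ))))
    (htaileq : TendstoUniformlyOn (fun z x => F x z / Fu z) K (𝓝[>] (0:ℝ)) Xs)
    :
    ∃ c : Fin d → ℝ, (∑ i, (∫ x, x i ∂μ) * c i) = 1 ∧
      (∀ x ∈ Xs, 0 < (∑ i, x i * c i) ∧ K x = (∑ i, x i * c i) ^ (1/ξ)) ∧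
      ∀ Ks : Set ℝ, IsCompact Ks → Ks ⊆ Set.Ioi 0 →
        ∀ ε > (0:ℝ), ∀ᶠ T : ℕ in atTop, ∀ k ∈ Ks,
          ‖(1 / sInf {z | (1:ℝ) / (T:ℝ) < Fu z}) • γ (k / (T:ℝ)) - (k ^ (-ξ)) • c‖ < ε :=
  extremal_qr_lem91ii_type3_general d μ Xs hXssupp hXscpt hposdef η hη γ F hFmono hlin Fu hFumono
    hFurc hFuinv K hKpos ξ hξ hFu0 hFupos hreg htaileq
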